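/- Let u : [0,T] → [0,∞) be continuous with u(t) ≤ a + b∫_0^t u(s) ds + c∫_0^t √(u(s)) ds for all t, where a, b, c ≥ 0. Then u(t) ≤ ( (√a + (c/2)t) e^{(b/2)t} )² ≤ (√a + (c/2)T)² e^{bT} for all t ∈ [0,T]. -/

import Mathlib

/-!
Let `V` be the right-hand side of the integral inequality, so `u ≤ V`, `V 0 = a` and
`V' = b u + c √u ≤ b V + c √V`. For `a > 0` the function `w = √V` is differentiable and
satisfies the linear differential inequality `w' ≤ (b/2) w + c/2`, whence
`w t ≤ (√a + (c/2) t) e^{(b/2) t}` because `w t e^{-(b/2) t} - (c/2) t` is antitone.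
For `a = 0`, replace `a` by `a' > a` and let `a' ↓ a`.
-/

open Set Real

lemma hasDerivAt_integral_of_continuousOn {f : ℝ → ℝ} {a b x : ℝ}
    (hf : ContinuousOn f (Icc a b)) (hx : x ∈ Ioo a b) :
    HasDerivAt (fun t => ∫ s in a..t, f s) (f x) x :=
  intervalIntegral.integral_hasDerivAt_right
    ((hf.mono (Icc_subset_Icc_right hx.2.le)).intervalIntegrable_of_Icc hx.1.le)
    ((hf.mono Ioo_subset_Icc_self).stronglyMeasurableAtFilter isOpen_Ioo x hx)
    (hf.continuousAt (Icc_mem_nhds hx.1 hx.2))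

lemma continuousOn_integral_of_continuousOn {f : ℝ → ℝ} {a b : ℝ}
    (hf : ContinuousOn f (Icc a b)) :
    ContinuousOn (fun t => ∫ s in a..t, f s) (Icc a b) :=
  (intervalIntegral.continuousOn_primitive hf.integrableOn_Icc).congr fun _ hx =>
    intervalIntegral.integral_of_le hx.1

lemma le_add_mul_mul_exp_of_hasDerivAt_le {w w' : ℝ → ℝ} {K ε T : ℝ} (hK : 0 ≤ K)
    (hε : 0 ≤ ε) (hw : ContinuousOn w (Icc 0 T))
    (hw' : ∀ x ∈ Ioo 0 T, HasDerivAt w (w' x) x)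
    (hbound : ∀ x ∈ Ioo 0 T, w' x ≤ K * w x + ε) :
    ∀ t ∈ Icc 0 T, w t ≤ (w 0 + ε * t) * exp (K * t) := by
  set g : ℝ → ℝ := fun t => w t * exp (-(K * t)) - ε * t
  have hg_anti : AntitoneOn g (Icc 0 T) := by
    refine antitoneOn_of_hasDerivWithinAt_nonpos (convex_Icc 0 T)
      (f' := fun x => (w' x - K * w x) * exp (-(K * x)) - ε) ?_ ?_ ?_
    · fun_prop
    · rw [interior_Icc]
      intro x hx
      have hexp : HasDerivAt (fun t => exp (-(K * t))) (exp (-(K * x)) * -K) x := by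
        simpa using ((hasDerivAt_id x).const_mul K).neg.exp
      exact ((((hw' x hx).mul hexp).sub ((hasDerivAt_id' x).const_mul ε)).congr_deriv
        (by ring)).hasDerivWithinAt
    · rw [interior_Icc]
      intro x hx
      have hexp_le : exp (-(K * x)) ≤ 1 := exp_le_one_iff.2 (by nlinarith [hx.1])
      have hslope : w' x - K * w x ≤ ε := by linarith [hbound x hx]
      nlinarith [exp_pos (-(K * x))]
  intro t ht
  have hgt : g t ≤ g 0 := hg_anti (left_mem_Icc.2 (ht.1.trans ht.2)) ht ht.1
  have hexp : exp (-(K * t)) * exp (K * t) = 1 := by rw [← exp_add]; simp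
  simp only [g, mul_zero, neg_zero, exp_zero, mul_one, sub_zero] at hgt
  calc w t = w t * exp (-(K * t)) * exp (K * t) := by rw [mul_assoc, hexp, mul_one]
    _ ≤ (w 0 + ε * t) * exp (K * t) := by gcongr; linarith

lemma sqrt_le_of_hasDerivAt_le {V V' : ℝ → ℝ} {b c T : ℝ} (hb : 0 ≤ b) (hc : 0 ≤ c)
    (hV : ContinuousOn V (Icc 0 T)) (hVpos : ∀ x ∈ Ioo 0 T, 0 < V x)
    (hV' : ∀ x ∈ Ioo 0 T, HasDerivAt V (V' x) x)
    (hbound : ∀ x ∈ Ioo 0 T, V' x ≤ b * V x + c * √(V x)) :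
    ∀ t ∈ Icc 0 T, √(V t) ≤ (√(V 0) + c / 2 * t) * exp (b / 2 * t) := by
  refine le_add_mul_mul_exp_of_hasDerivAt_le (w' := fun x => V' x / (2 * √(V x)))
    (by positivity) (by positivity) (continuous_sqrt.comp_continuousOn hV)
    (fun x hx => (hV' x hx).sqrt (hVpos x hx).ne') fun x hx => ?_
  have hsqrt : 0 < √(V x) := sqrt_pos.2 (hVpos x hx)
  calc V' x / (2 * √(V x)) ≤ (b * V x + c * √(V x)) / (2 * √(V x)) := by
        gcongr; exact hbound x hx
    _ = b / 2 * √(V x) + c / 2 := by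
        rw [div_eq_iff (by positivity)]
        linear_combination (-b) * mul_self_sqrt (hVpos x hx).le

lemma le_sq_of_le_add_integral_add_integral_sqrt {T a b c : ℝ} (ha : 0 < a) (hb : 0 ≤ b)
    (hc : 0 ≤ c) {u : ℝ → ℝ} (hcont : ContinuousOn u (Icc 0 T))
    (hnn : ∀ t ∈ Icc (0 : ℝ) T, 0 ≤ u t)
    (hineq : ∀ t ∈ Icc (0 : ℝ) T,
      u t ≤ a + b * (∫ s in (0 : ℝ)..t, u s) + c * ∫ s in (0 : ℝ)..t, √(u s)) :
    ∀ t ∈ Icc 0 T, u t ≤ ((√a + c / 2 * t) * exp (b / 2 * t)) ^ 2 := by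
  set V : ℝ → ℝ := fun t =>
    a + b * (∫ s in (0 : ℝ)..t, u s) + c * ∫ s in (0 : ℝ)..t, √(u s)
  have hsqrt_cont : ContinuousOn (fun s => √(u s)) (Icc 0 T) :=
    continuous_sqrt.comp_continuousOn hcont
  have ha_le : ∀ t ∈ Icc 0 T, a ≤ V t := fun t ht => by
    have hu : 0 ≤ ∫ s in (0 : ℝ)..t, u s :=
      intervalIntegral.integral_nonneg ht.1 fun s hs => hnn s ⟨hs.1, hs.2.trans ht.2⟩
    have hsu : 0 ≤ ∫ s in (0 : ℝ)..t, √(u s) :=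
      intervalIntegral.integral_nonneg ht.1 fun s _ => sqrt_nonneg _
    simp only [V]
    nlinarith
  have hV_sqrt := sqrt_le_of_hasDerivAt_le (V := V) (V' := fun x => b * u x + c * √(u x)) hb hc
    ((continuousOn_const.add (continuousOn_const.mul
      (continuousOn_integral_of_continuousOn hcont))).add
      (continuousOn_const.mul (continuousOn_integral_of_continuousOn hsqrt_cont)))
    (fun x hx => ha.trans_le (ha_le x (Ioo_subset_Icc_self hx)))
    (fun x hx => (((hasDerivAt_integral_of_continuousOn hcont hx).const_mul b).const_add a).add
      ((hasDerivAt_integral_of_continuousOn hsqrt_cont hx).const_mul c))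
    fun x hx => by
      have hux := hineq x (Ioo_subset_Icc_self hx)
      gcongr
  intro t ht
  have hV0 : V 0 = a := by simp [V]
  rw [hV0] at hV_sqrt
  calc u t ≤ √(V t) ^ 2 := by rw [sq_sqrt (ha.le.trans (ha_le t ht))]; exact hineq t ht
    _ ≤ _ := by gcongr; exact hV_sqrt t ht

lemma sq_add_mul_mul_exp_le {x b c t T : ℝ} (hx : 0 ≤ x) (hb : 0 ≤ b) (hc : 0 ≤ c)
    (ht : t ∈ Icc 0 T) :
    ((x + c / 2 * t) * exp (b / 2 * t)) ^ 2 ≤ (x + c / 2 * T) ^ 2 * exp (b * T) := by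
  have hT : ((x + c / 2 * T) * exp (b / 2 * T)) ^ 2 = (x + c / 2 * T) ^ 2 * exp (b * T) := by
    rw [mul_pow, ← exp_nat_mul]; ring_nf
  rw [← hT]
  obtain ⟨ht0, htT⟩ := ht
  have hxT : 0 ≤ x + c / 2 * T := by nlinarith
  gcongr

theorem stmt16_general (T a b c : ℝ) (ha : 0 ≤ a) (hb : 0 ≤ b)
    (hc : 0 ≤ c) (u : ℝ → ℝ)
    (hcont : ContinuousOn u (Set.Icc 0 T))
    (hnn : ∀ t ∈ Set.Icc (0 : ℝ) T, 0 ≤ u t)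
    (hineq : ∀ t ∈ Set.Icc (0 : ℝ) T,
      u t ≤ a + b * (∫ s in (0 : ℝ)..t, u s) +
        c * ∫ s in (0 : ℝ)..t, Real.sqrt (u s)) :
    ∀ t ∈ Set.Icc (0 : ℝ) T,
      u t ≤ ((Real.sqrt a + c / 2 * t) * Real.exp (b / 2 * t)) ^ 2 ∧
      ((Real.sqrt a + c / 2 * t) * Real.exp (b / 2 * t)) ^ 2 ≤
        (Real.sqrt a + c / 2 * T) ^ 2 * Real.exp (b * T) := by
  intro t ht
  refine ⟨?_, sq_add_mul_mul_exp_le (sqrt_nonneg a) hb hc ht⟩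
  have hbound_cont : Continuous fun a' => ((√a' + c / 2 * t) * exp (b / 2 * t)) ^ 2 := by
    fun_prop
  refine ge_of_tendsto (hbound_cont.continuousWithinAt (s := Ioi a)).tendsto
    (eventually_nhdsWithin_of_forall fun a' (ha' : a < a') => ?_)
  exact le_sq_of_le_add_integral_add_integral_sqrt (ha.trans_lt ha') hb hc hcont hnn
    (fun s hs => (hineq s hs).trans (by linarith)) t ht

theorem stmt16 (T a b c : ℝ) (hT : 0 < T) (ha : 0 ≤ a) (hb : 0 ≤ b)
    (hc : 0 ≤ c) (u : ℝ → ℝ)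
    (hcont : ContinuousOn u (Set.Icc 0 T))
    (hnn : ∀ t ∈ Set.Icc (0 : ℝ) T, 0 ≤ u t)
    (hineq : ∀ t ∈ Set.Icc (0 : ℝ) T,
      u t ≤ a + b * (∫ s in (0 : ℝ)..t, u s) +
        c * ∫ s in (0 : ℝ)..t, Real.sqrt (u s)) :
    ∀ t ∈ Set.Icc (0 : ℝ) T,
      u t ≤ ((Real.sqrt a + c / 2 * t) * Real.exp (b / 2 * t)) ^ 2 ∧
      ((Real.sqrt a + c / 2 * t) * Real.exp (b / 2 * t)) ^ 2 ≤
        (Real.sqrt a + c / 2 * T) ^ 2 * Real.exp (b * T) :=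
  stmt16_general T a b c ha hb hc u hcont hnn hineq
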